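/- arXiv:1803.05694 — 2 statements merged into one kernel-verified Lean document; each statement's English description precedes it below -/
import Mathlib

section
/- Let 0 < s < 1, N > 2s, and let u ∈ L²(ℝ^N) ∩ L^{2*}(ℝ^N) with 2* = 2N/(N-2s). Let φ : ℝ^N → ℝ be Lipschitz with Lipschitz constant L and bounded by 1, with φ ≡ constant outside the ball B(x₀, 2ρ). Then for any K > 4, ∬_{ℝ^{2N}} |φ(x)-φ(y)|² |u(x)|² / |x-y|^{N+2s} dx dy ≤ C ρ^{-2s} ∫_{B(x₀, Kρ)} |u(x)|² dx + C K^{-N} ‖u‖²_{L^{2*}}, where C depends only on N, s, L ρ. -/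
/-!
Write the double integral as `∫ |u(x)|² Γφ(x) dx` with `Γφ(x) = ∫ |φ(x)-φ(y)|² |x-y|^{-N-2s} dy`.
Splitting the `y`-integral at `|x-y| = 1`, the Lipschitz bound leaves the kernel
`|x-y|^{2-N-2s}`, integrable near the diagonal because `s < 1`, and `|φ(x)-φ(y)| ≤ 2` leaves
`|x-y|^{-N-2s}`, integrable at infinity because `s > 0`; so `Γφ` is bounded and `B(x₀, Kρ)` costs
`C ρ^{-2s} ∫_{B(x₀,Kρ)} |u|²`. For `|x-x₀| ≥ Kρ ≥ 4ρ` the integrand vanishes unless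
`y ∈ B(x₀, 2ρ)`, where `|x-y| ≥ |x-x₀|/2`, so `Γφ(x) ≲ ρ^N |x-x₀|^{-N-2s}`. Hölder with exponents
`N/(N-2s)` and `N/(2s)` and the scaling `∫_{|z|>R} |z|^{-(N+2s)N/(2s)} dz = c R^{-N²/(2s)}` give
the factor `K^{-N} ‖u‖²_{2*}`.
-/

open MeasureTheory Metric Set
open scoped ENNReal NNReal

theorem preimage_sub_right_ball {G : Type*} [SeminormedAddCommGroup G] (x : G) (r : ℝ) :
    (· - x) ⁻¹' ball 0 r = ball x r := by
  ext y
  simp [dist_eq_norm]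

section Translation

variable {G : Type*} [NormedAddCommGroup G] [MeasurableSpace G] [MeasurableAdd G]
  (μ : Measure G) [μ.IsAddRightInvariant]

theorem setLIntegral_ball_dist_rpow (x : G) (r t : ℝ) :
    ∫⁻ y in ball x r, ENNReal.ofReal (dist y x ^ t) ∂μ
      = ∫⁻ z in ball 0 r, ENNReal.ofReal (‖z‖ ^ t) ∂μ := by
  simpa [preimage_sub_right_ball, dist_eq_norm] using
    (measurePreserving_sub_right μ x).setLIntegral_comp_preimage_emb
      (measurableEmbedding_subRight x) (fun z => ENNReal.ofReal (‖z‖ ^ t)) (ball 0 r)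

theorem setLIntegral_compl_ball_dist_rpow (x : G) (r t : ℝ) :
    ∫⁻ y in (ball x r)ᶜ, ENNReal.ofReal (dist y x ^ t) ∂μ
      = ∫⁻ z in (ball 0 r)ᶜ, ENNReal.ofReal (‖z‖ ^ t) ∂μ := by
  simpa [← preimage_sub_right_ball x r, dist_eq_norm] using
    (measurePreserving_sub_right μ x).setLIntegral_comp_preimage_emb
      (measurableEmbedding_subRight x) (fun z => ENNReal.ofReal (‖z‖ ^ t)) (ball 0 r)ᶜ

end Translation

section AddHaar

variable {E : Type*} [NormedAddCommGroup E] [NormedSpace ℝ E] [FiniteDimensional ℝ E]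
  [MeasurableSpace E] [BorelSpace E] (μ : Measure E) [μ.IsAddHaarMeasure]

theorem setLIntegral_ball_norm_rpow_lt_top (hd : 1 ≤ Module.finrank ℝ E) (r : ℝ) {t : ℝ}
    (ht : -(Module.finrank ℝ E : ℝ) < t) :
    ∫⁻ z in ball 0 r, ENNReal.ofReal (‖z‖ ^ t) ∂μ < ∞ := by
  refine IntegrableOn.setLIntegral_lt_top <| integrableOn_ball_of_norm_le_rpow (α := -t) (C := 1)
    hd (by linarith) (ae_of_all _ fun z => ?_) (measurable_norm.pow_const t).aestronglyMeasurable
  rw [neg_neg, one_mul, Real.norm_of_nonneg (by positivity)]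

theorem setLIntegral_compl_ball_norm_rpow_lt_top {t : ℝ}
    (ht : t < -(Module.finrank ℝ E : ℝ)) :
    ∫⁻ z in (ball 0 1)ᶜ, ENNReal.ofReal (‖z‖ ^ t) ∂μ < ∞ := by
  have ht0 : t < 0 := by linarith [(Module.finrank ℝ E).cast_nonneg (α := ℝ)]
  calc ∫⁻ z in (ball 0 1)ᶜ, ENNReal.ofReal (‖z‖ ^ t) ∂μ
      ≤ ∫⁻ z in (ball 0 1)ᶜ, ENNReal.ofReal (2 ^ (-t) * (1 + ‖z‖) ^ t) ∂μ := by
        refine setLIntegral_mono (by fun_prop) fun z hz => ENNReal.ofReal_le_ofReal ?_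
        have hz : 1 ≤ ‖z‖ := by simpa using hz
        calc ‖z‖ ^ t = 2 ^ (-t) * (2 * ‖z‖) ^ t := by
              rw [Real.mul_rpow zero_le_two (by positivity), ← mul_assoc,
                ← Real.rpow_add zero_lt_two]
              simp
          _ ≤ 2 ^ (-t) * (1 + ‖z‖) ^ t := mul_le_mul_of_nonneg_left
                (Real.rpow_le_rpow_of_nonpos (by linarith) (by linarith) ht0.le) (by positivity)
    _ ≤ ∫⁻ z, ENNReal.ofReal (2 ^ (-t) * (1 + ‖z‖) ^ t) ∂μ := setLIntegral_le_lintegral _ _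
    _ < ∞ := by
        simp_rw [ENNReal.ofReal_mul (by positivity : (0 : ℝ) ≤ 2 ^ (-t))]
        rw [lintegral_const_mul' _ _ ENNReal.ofReal_ne_top]
        refine ENNReal.mul_lt_top ENNReal.ofReal_lt_top ?_
        simpa using finite_integral_one_add_norm (μ := μ) (r := -t) (by linarith)

theorem setLIntegral_compl_ball_norm_rpow {r : ℝ} (hr : 0 < r) (t : ℝ) :
    ∫⁻ z in (ball 0 r)ᶜ, ENNReal.ofReal (‖z‖ ^ t) ∂μ
      = ENNReal.ofReal (r ^ (Module.finrank ℝ E + t))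
        * ∫⁻ z in (ball 0 1)ᶜ, ENNReal.ofReal (‖z‖ ^ t) ∂μ := by
  have hpre : (r • ·) ⁻¹' (ball (0 : E) r)ᶜ = (ball 0 1)ᶜ := by
    ext z
    simp [norm_smul, abs_of_pos hr, mul_lt_iff_lt_one_right hr]
  have hscale := setLIntegral_map (μ := μ) (s := (ball (0 : E) r)ᶜ)
    (f := fun z => ENNReal.ofReal (‖z‖ ^ t)) measurableSet_ball.compl
    (measurable_norm.pow_const t).ennreal_ofReal (measurable_const_smul r)
  rw [Measure.map_addHaar_smul μ hr.ne', Measure.restrict_smul, lintegral_smul_measure, hpre,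
    abs_of_pos (by positivity), smul_eq_mul] at hscale
  simp_rw [norm_smul, Real.norm_of_nonneg hr.le, Real.mul_rpow hr.le (norm_nonneg _),
    ENNReal.ofReal_mul (Real.rpow_nonneg hr.le _)] at hscale
  rw [lintegral_const_mul' _ _ ENNReal.ofReal_ne_top] at hscale
  have hrd : 0 < r ^ Module.finrank ℝ E := by positivity
  calc ∫⁻ z in (ball 0 r)ᶜ, ENNReal.ofReal (‖z‖ ^ t) ∂μ
      = ENNReal.ofReal (r ^ Module.finrank ℝ E) * (ENNReal.ofReal (r ^ Module.finrank ℝ E)⁻¹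
          * ∫⁻ z in (ball 0 r)ᶜ, ENNReal.ofReal (‖z‖ ^ t) ∂μ) := by
        rw [← mul_assoc, ← ENNReal.ofReal_mul hrd.le, mul_inv_cancel₀ hrd.ne', ENNReal.ofReal_one,
          one_mul]
    _ = _ := by
        rw [hscale, ← mul_assoc, ← ENNReal.ofReal_mul hrd.le, ← Real.rpow_natCast,
          ← Real.rpow_add hr]

theorem setLIntegral_compl_ball_mul_dist_rpow_le {p q : ℝ} (hpq : p.HolderConjugate q)
    {f : E → ℝ≥0∞} (hf : AEMeasurable f μ) (x₀ : E) {r : ℝ} (hr : 0 < r) (a : ℝ) :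
    ∫⁻ x in (ball x₀ r)ᶜ, f x * ENNReal.ofReal (dist x x₀ ^ (-a)) ∂μ
      ≤ (∫⁻ x, f x ^ p ∂μ) ^ (1 / p)
        * ((∫⁻ z in (ball 0 1)ᶜ, ENNReal.ofReal (‖z‖ ^ (-(a * q))) ∂μ) ^ (1 / q)
          * ENNReal.ofReal (r ^ (Module.finrank ℝ E / q - a))) := by
  have hpow (x : E) :
      ENNReal.ofReal (dist x x₀ ^ (-a)) ^ q = ENNReal.ofReal (dist x x₀ ^ (-(a * q))) := by
    rw [ENNReal.ofReal_rpow_of_nonneg (by positivity) hpq.symm.nonneg,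
      ← Real.rpow_mul dist_nonneg, neg_mul]
  calc ∫⁻ x in (ball x₀ r)ᶜ, f x * ENNReal.ofReal (dist x x₀ ^ (-a)) ∂μ
      ≤ (∫⁻ x in (ball x₀ r)ᶜ, f x ^ p ∂μ) ^ (1 / p)
        * (∫⁻ x in (ball x₀ r)ᶜ, ENNReal.ofReal (dist x x₀ ^ (-a)) ^ q ∂μ) ^ (1 / q) :=
        ENNReal.lintegral_mul_le_Lp_mul_Lq _ hpq hf.restrict (by fun_prop)
    _ ≤ (∫⁻ x, f x ^ p ∂μ) ^ (1 / p)
        * (∫⁻ x in (ball x₀ r)ᶜ, ENNReal.ofReal (dist x x₀ ^ (-a)) ^ q ∂μ) ^ (1 / q) := by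
        gcongr
        · exact one_div_nonneg.2 hpq.nonneg
        · exact Measure.restrict_le_self
    _ = _ := by
        simp_rw [hpow]
        have hq : 0 ≤ 1 / q := one_div_nonneg.2 hpq.symm.nonneg
        rw [setLIntegral_compl_ball_dist_rpow, setLIntegral_compl_ball_norm_rpow μ hr,
          mul_comm (ENNReal.ofReal _), ENNReal.mul_rpow_of_nonneg _ _ hq,
          ENNReal.ofReal_rpow_of_nonneg (by positivity) hq, ← Real.rpow_mul hr.le]
        congr 4
        field_simp [hpq.symm.ne_zero]
        ring

end AddHaar

section Gagliardo

variable {E F : Type*} [NormedAddCommGroup E] [NormedAddCommGroup F]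

noncomputable def gagliardoDensity [MeasurableSpace E] (μ : Measure E) (a : ℝ) (φ : E → F)
    (x : E) : ℝ≥0∞ :=
  ∫⁻ y, ENNReal.ofReal (‖φ x - φ y‖ ^ 2 / ‖x - y‖ ^ a) ∂μ

theorem ofReal_mul_gagliardoDensity [MeasurableSpace E] (μ : Measure E) (a : ℝ) (φ : E → F)
    (x : E) {g : ℝ} (hg : 0 ≤ g) :
    ENNReal.ofReal g * gagliardoDensity μ a φ x
      = ∫⁻ y, ENNReal.ofReal (‖φ x - φ y‖ ^ 2 * g / ‖x - y‖ ^ a) ∂μ := by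
  rw [gagliardoDensity, ← lintegral_const_mul' _ _ ENNReal.ofReal_ne_top]
  congr 1 with y
  rw [← ENNReal.ofReal_mul hg, mul_div_assoc', mul_comm g]

theorem LipschitzWith.sq_norm_sub_div_rpow_le {φ : E → F} {K : ℝ≥0} (hφ : LipschitzWith K φ)
    (x y : E) (a : ℝ) :
    ‖φ x - φ y‖ ^ 2 / ‖x - y‖ ^ a ≤ K ^ 2 * dist y x ^ (2 - a) := by
  rcases eq_or_ne x y with rfl | hxy
  · rw [sub_self, sub_self, norm_zero, norm_zero, zero_pow two_ne_zero, zero_div]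
    positivity
  have hpos : 0 < ‖x - y‖ := norm_pos_iff.2 (sub_ne_zero.2 hxy)
  calc ‖φ x - φ y‖ ^ 2 / ‖x - y‖ ^ a ≤ (K * ‖x - y‖) ^ 2 / ‖x - y‖ ^ a := by
        gcongr
        exact hφ.norm_sub_le x y
    _ = K ^ 2 * dist y x ^ (2 - a) := by
        rw [dist_comm, dist_eq_norm, Real.rpow_sub hpos, mul_pow, mul_div_assoc,
          Real.rpow_two]

theorem sq_norm_sub_div_rpow_le_of_norm_le_one {φ : E → F} (hφ : ∀ x, ‖φ x‖ ≤ 1)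
    (x y : E) (a : ℝ) :
    ‖φ x - φ y‖ ^ 2 / ‖x - y‖ ^ a ≤ 4 * dist y x ^ (-a) := by
  have h2 : ‖φ x - φ y‖ ≤ 2 := (norm_sub_le _ _).trans (by linarith [hφ x, hφ y])
  calc ‖φ x - φ y‖ ^ 2 / ‖x - y‖ ^ a ≤ 2 ^ 2 / ‖x - y‖ ^ a := by gcongr
    _ = 4 * dist y x ^ (-a) := by
        rw [dist_comm, dist_eq_norm, Real.rpow_neg (norm_nonneg _)]
        ring

variable [MeasurableSpace E] (μ : Measure E)

theorem gagliardoDensity_le_of_eqOn_compl_ball [OpensMeasurableSpace E] {φ : E → F}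
    (hφ1 : ∀ x, ‖φ x‖ ≤ 1) {x₀ : E} {R : ℝ} {c : F} (hc : ∀ y ∉ ball x₀ R, φ y = c)
    {a : ℝ} (ha : 0 ≤ a) {x : E} (hx : 2 * R ≤ dist x x₀) :
    gagliardoDensity μ a φ x
      ≤ ENNReal.ofReal (4 * 2 ^ a) * μ (ball x₀ R) * ENNReal.ofReal (dist x x₀ ^ (-a)) := by
  set M := ENNReal.ofReal (4 * 2 ^ a * dist x x₀ ^ (-a)) with hM
  have hpt (y : E) :
      ENNReal.ofReal (‖φ x - φ y‖ ^ 2 / ‖x - y‖ ^ a) ≤ (ball x₀ R).indicator (fun _ => M) y := by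
    by_cases hy : y ∈ ball x₀ R
    · rw [indicator_of_mem hy]
      apply ENNReal.ofReal_le_ofReal
      have hxy : dist x x₀ / 2 ≤ dist y x := by
        linarith [mem_ball.1 hy, dist_triangle x y x₀, dist_comm x y]
      have hx0 : 0 < dist x x₀ / 2 := by linarith [mem_ball.1 hy, dist_nonneg (x := y) (y := x₀)]
      calc ‖φ x - φ y‖ ^ 2 / ‖x - y‖ ^ a ≤ 4 * dist y x ^ (-a) :=
            sq_norm_sub_div_rpow_le_of_norm_le_one hφ1 x y a
        _ ≤ 4 * (dist x x₀ / 2) ^ (-a) := mul_le_mul_of_nonneg_left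
            (Real.rpow_le_rpow_of_nonpos hx0 hxy (neg_nonpos.2 ha)) zero_le_four
        _ = 4 * 2 ^ a * dist x x₀ ^ (-a) := by
            rw [Real.div_rpow dist_nonneg zero_le_two, Real.rpow_neg zero_le_two, div_inv_eq_mul]
            ring
    · have hx' : x ∉ ball x₀ R := fun h => by
        linarith [mem_ball.1 h, dist_nonneg (x := x) (y := x₀)]
      simp [indicator_of_notMem hy, hc y hy, hc x hx']
  calc gagliardoDensity μ a φ x ≤ ∫⁻ y, (ball x₀ R).indicator (fun _ => M) y ∂μ :=
        lintegral_mono hpt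
    _ = _ := by
        rw [lintegral_indicator_const measurableSet_ball, hM, ENNReal.ofReal_mul (by positivity)]
        ring

theorem gagliardoDensity_le_of_lipschitzWith [MeasurableAdd E] [μ.IsAddRightInvariant]
    [OpensMeasurableSpace E] {φ : E → F} {K : ℝ≥0} (hφ : LipschitzWith K φ)
    (hφ1 : ∀ x, ‖φ x‖ ≤ 1) (a : ℝ) (x : E) :
    gagliardoDensity μ a φ x
      ≤ ENNReal.ofReal (K ^ 2) * ∫⁻ z in ball 0 1, ENNReal.ofReal (‖z‖ ^ (2 - a)) ∂μ
        + ENNReal.ofReal 4 * ∫⁻ z in (ball 0 1)ᶜ, ENNReal.ofReal (‖z‖ ^ (-a)) ∂μ := by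
  rw [gagliardoDensity, ← lintegral_add_compl _ (measurableSet_ball (x := x) (ε := 1)),
    ← setLIntegral_ball_dist_rpow μ x, ← setLIntegral_compl_ball_dist_rpow μ x,
    ← lintegral_const_mul' _ _ ENNReal.ofReal_ne_top,
    ← lintegral_const_mul' _ _ ENNReal.ofReal_ne_top]
  gcongr with y y <;> rw [← ENNReal.ofReal_mul (by positivity)] <;> apply ENNReal.ofReal_le_ofReal
  · exact hφ.sq_norm_sub_div_rpow_le x y a
  · exact sq_norm_sub_div_rpow_le_of_norm_le_one hφ1 x y a

theorem setLIntegral_mul_gagliardoDensity_le [MeasurableAdd E] [μ.IsAddRightInvariant]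
    [OpensMeasurableSpace E] {φ : E → F} {K : ℝ≥0} (hφ : LipschitzWith K φ)
    (hφ1 : ∀ x, ‖φ x‖ ≤ 1) (a : ℝ) {f : E → ℝ≥0∞} (hf : AEMeasurable f μ) (S : Set E) :
    ∫⁻ x in S, f x * gagliardoDensity μ a φ x ∂μ
      ≤ (ENNReal.ofReal (K ^ 2) * ∫⁻ z in ball 0 1, ENNReal.ofReal (‖z‖ ^ (2 - a)) ∂μ
        + ENNReal.ofReal 4 * ∫⁻ z in (ball 0 1)ᶜ, ENNReal.ofReal (‖z‖ ^ (-a)) ∂μ)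
        * ∫⁻ x in S, f x ∂μ := by
  refine (lintegral_mono fun x => mul_le_mul_right
    (gagliardoDensity_le_of_lipschitzWith μ hφ hφ1 a x) (f x)).trans_eq ?_
  rw [lintegral_mul_const'' _ hf.restrict, mul_comm]

end Gagliardo

section CutoffCommutator

variable {E F G : Type*} [NormedAddCommGroup E] [NormedSpace ℝ E] [FiniteDimensional ℝ E]
  [MeasurableSpace E] [BorelSpace E] (μ : Measure E) [μ.IsAddHaarMeasure]
  [NormedAddCommGroup F] [NormedAddCommGroup G]

theorem setLIntegral_compl_ball_mul_gagliardoDensity_le {p q : ℝ} (hpq : p.HolderConjugate q)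
    {f : E → ℝ≥0∞} (hf : AEMeasurable f μ) {φ : E → F} (hφ1 : ∀ x, ‖φ x‖ ≤ 1) {x₀ : E}
    {R : ℝ} {c : F} (hc : ∀ y ∉ ball x₀ R, φ y = c) {a : ℝ} (ha : 0 ≤ a) {r : ℝ}
    (hr : 2 * R ≤ r) (hr0 : 0 < r) :
    ∫⁻ x in (ball x₀ r)ᶜ, f x * gagliardoDensity μ a φ x ∂μ
      ≤ ENNReal.ofReal (4 * 2 ^ a) * μ (ball x₀ R) * ((∫⁻ x, f x ^ p ∂μ) ^ (1 / p)
        * ((∫⁻ z in (ball 0 1)ᶜ, ENNReal.ofReal (‖z‖ ^ (-(a * q))) ∂μ) ^ (1 / q)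
          * ENNReal.ofReal (r ^ (Module.finrank ℝ E / q - a)))) := by
  set B := ENNReal.ofReal (4 * 2 ^ a) * μ (ball x₀ R)
  calc ∫⁻ x in (ball x₀ r)ᶜ, f x * gagliardoDensity μ a φ x ∂μ
      ≤ ∫⁻ x in (ball x₀ r)ᶜ, B * (f x * ENNReal.ofReal (dist x x₀ ^ (-a))) ∂μ := by
        refine setLIntegral_mono' measurableSet_ball.compl fun x hx => ?_
        refine (mul_le_mul_right (gagliardoDensity_le_of_eqOn_compl_ball μ hφ1 hc ha
          (hr.trans (by simpa using hx))) (f x)).trans_eq ?_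
        ring
    _ = B * ∫⁻ x in (ball x₀ r)ᶜ, f x * ENNReal.ofReal (dist x x₀ ^ (-a)) ∂μ :=
        lintegral_const_mul' _ _ (ENNReal.mul_ne_top ENNReal.ofReal_ne_top measure_ball_lt_top.ne)
    _ ≤ _ := mul_le_mul_right (setLIntegral_compl_ball_mul_dist_rpow_le μ hpq hf x₀ hr0 a) _

theorem exists_cutoff_commutator_le (hd : 1 ≤ Module.finrank ℝ E) {s : ℝ} (hs0 : 0 < s)
    (hs1 : s < 1) (hds : 2 * s < Module.finrank ℝ E) (K : ℝ≥0) {R : ℝ} (hR : 0 < R) :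
    ∃ A B : ℝ≥0∞, A ≠ ∞ ∧ B ≠ ∞ ∧
      ∀ (u : E → G) (φ : E → F) (x₀ : E) (c : F) (r : ℝ), AEStronglyMeasurable u μ →
        LipschitzWith K φ → (∀ x, ‖φ x‖ ≤ 1) → (∀ y ∉ ball x₀ R, φ y = c) → 2 * R ≤ r →
        ∫⁻ x, ∫⁻ y, ENNReal.ofReal (‖φ x - φ y‖ ^ 2 * ‖u x‖ ^ 2
            / ‖x - y‖ ^ ((Module.finrank ℝ E : ℝ) + 2 * s)) ∂μ ∂μ
          ≤ A * ∫⁻ x in ball x₀ r, ENNReal.ofReal (‖u x‖ ^ 2) ∂μ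
            + B * ENNReal.ofReal (r ^ (-(Module.finrank ℝ E : ℝ)))
              * (∫⁻ x, ENNReal.ofReal (‖u x‖ ^ (2 * (Module.finrank ℝ E : ℝ)
                  / ((Module.finrank ℝ E : ℝ) - 2 * s))) ∂μ)
                ^ (((Module.finrank ℝ E : ℝ) - 2 * s) / (Module.finrank ℝ E : ℝ)) := by
  set d : ℝ := (Module.finrank ℝ E : ℝ)
  have hd0 : 0 < d := by linarith
  have hpq : (d / (d - 2 * s)).HolderConjugate (d / (2 * s)) := by
    simpa only [inv_div] using Real.HolderConjugate.inv_inv (a := (d - 2 * s) / d)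
      (b := 2 * s / d) (by bound) (by positivity) (by field_simp; ring)
  set A := ENNReal.ofReal (K ^ 2) * ∫⁻ z in ball 0 1, ENNReal.ofReal (‖z‖ ^ (2 - (d + 2 * s))) ∂μ
    + ENNReal.ofReal 4 * ∫⁻ z in (ball 0 1)ᶜ, ENNReal.ofReal (‖z‖ ^ (-(d + 2 * s))) ∂μ
  set B := ENNReal.ofReal (4 * 2 ^ (d + 2 * s)) * μ (ball 0 R)
    * (∫⁻ z in (ball 0 1)ᶜ, ENNReal.ofReal (‖z‖ ^ (-((d + 2 * s) * (d / (2 * s))))) ∂μ)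
      ^ (1 / (d / (2 * s)))
  have hA : A ≠ ∞ := by
    have := (setLIntegral_ball_norm_rpow_lt_top μ hd 1 (t := 2 - (d + 2 * s)) (by linarith)).ne
    have := (setLIntegral_compl_ball_norm_rpow_lt_top μ (t := -(d + 2 * s)) (by linarith)).ne
    finiteness
  have hB : B ≠ ∞ := by
    have := (setLIntegral_compl_ball_norm_rpow_lt_top μ
      (t := -((d + 2 * s) * (d / (2 * s)))) ?_).ne
    · finiteness
    · rw [neg_lt_neg_iff, mul_div_assoc', lt_div_iff₀ (by positivity)]
      nlinarith
  refine ⟨A, B, hA, hB, fun u φ x₀ c r hu hφ hφ1 hc hr => ?_⟩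
  have hf : AEMeasurable (fun x => ENNReal.ofReal (‖u x‖ ^ 2)) μ :=
    (hu.norm.aemeasurable.pow_const 2).ennreal_ofReal
  have hfp (x : E) : ENNReal.ofReal (‖u x‖ ^ 2) ^ (d / (d - 2 * s))
      = ENNReal.ofReal (‖u x‖ ^ (2 * d / (d - 2 * s))) := by
    rw [ENNReal.ofReal_rpow_of_nonneg (by positivity) hpq.nonneg, ← Real.rpow_natCast,
      ← Real.rpow_mul (norm_nonneg _), Nat.cast_ofNat, mul_div_assoc]
  have hexp : d / (d / (2 * s)) - (d + 2 * s) = -d := by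
    field_simp
    ring
  rw [lintegral_congr fun x => (ofReal_mul_gagliardoDensity μ _ φ x (sq_nonneg ‖u x‖)).symm,
    ← lintegral_add_compl _ (measurableSet_ball (x := x₀) (ε := r))]
  refine add_le_add ?_ ?_
  · exact setLIntegral_mul_gagliardoDensity_le μ hφ hφ1 _ hf _
  · refine (setLIntegral_compl_ball_mul_gagliardoDensity_le μ hpq hf hφ1 hc (by positivity) hr
      (by linarith)).trans_eq ?_
    rw [hexp, lintegral_congr hfp, one_div_div, Measure.addHaar_ball_center]
    ring

end CutoffCommutator

theorem exists_pos_le_ofReal_mul_and_le_ofReal {A B : ℝ≥0∞} (hA : A ≠ ∞) (hB : B ≠ ∞) {w : ℝ}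
    (hw : 0 < w) : ∃ C : ℝ, 0 < C ∧ A ≤ ENNReal.ofReal (C * w) ∧ B ≤ ENNReal.ofReal C := by
  have hA0 := ENNReal.toReal_nonneg (a := A)
  have hB0 := ENNReal.toReal_nonneg (a := B)
  refine ⟨A.toReal / w + B.toReal + 1, by positivity, ?_, ?_⟩
  · rw [ENNReal.le_ofReal_iff_toReal_le hA (by positivity), add_mul, add_mul,
      div_mul_cancel₀ _ hw.ne']
    nlinarith
  · rw [ENNReal.le_ofReal_iff_toReal_le hB (by positivity)]
    linarith [div_nonneg hA0 hw.le]

theorem cutoff_commutator_general (N : ℕ) (hN : 1 ≤ N) (s : ℝ) (hs0 : 0 < s) (hs1 : s < 1)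
    (hNs : 2 * s < (N : ℝ)) (L ρ : ℝ) (hρ : 0 < ρ) :
    ∃ C : ℝ, 0 < C ∧
      ∀ (u φ : EuclideanSpace ℝ (Fin N) → ℂ) (x₀ : EuclideanSpace ℝ (Fin N)) (K : ℝ),
        4 < K →
        MemLp u 2 (volume : Measure (EuclideanSpace ℝ (Fin N))) →
        MemLp u (ENNReal.ofReal (2 * (N : ℝ) / ((N : ℝ) - 2 * s)))
          (volume : Measure (EuclideanSpace ℝ (Fin N))) →
        LipschitzWith (Real.toNNReal L) φ →
        (∀ x, ‖φ x‖ ≤ 1) →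
        (∃ c : ℂ, ∀ x ∉ Metric.ball x₀ (2 * ρ), φ x = c) →
        (∫⁻ x : EuclideanSpace ℝ (Fin N), ∫⁻ y : EuclideanSpace ℝ (Fin N),
            ENNReal.ofReal (‖φ x - φ y‖ ^ 2 * ‖u x‖ ^ 2
              / ‖x - y‖ ^ ((N : ℝ) + 2 * s)))
          ≤ ENNReal.ofReal (C * ρ ^ (-(2 * s)))
              * (∫⁻ x in Metric.ball x₀ (K * ρ), ENNReal.ofReal (‖u x‖ ^ 2))
            + ENNReal.ofReal (C * K ^ (-(N : ℝ)))
              * (∫⁻ x : EuclideanSpace ℝ (Fin N),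
                  ENNReal.ofReal (‖u x‖ ^ (2 * (N : ℝ) / ((N : ℝ) - 2 * s))))
                ^ (((N : ℝ) - 2 * s) / (N : ℝ)) := by
  obtain ⟨A, B, hA, hB, hbound⟩ := exists_cutoff_commutator_le
    (volume : Measure (EuclideanSpace ℝ (Fin N))) (F := ℂ) (G := ℂ) (by simpa using hN) hs0 hs1
    (by simpa using hNs) (Real.toNNReal L) (R := 2 * ρ) (by positivity)
  simp only [finrank_euclideanSpace_fin] at hbound
  obtain ⟨C, hC, hAC, hBC⟩ := exists_pos_le_ofReal_mul_and_le_ofReal hA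
    (ENNReal.mul_ne_top hB (ENNReal.ofReal_ne_top (r := ρ ^ (-(N : ℝ)))))
    (Real.rpow_pos_of_pos hρ (-(2 * s)))
  refine ⟨C, hC, fun u φ x₀ K hK hu _ hφ hφ1 ⟨c, hc⟩ => ?_⟩
  refine (hbound u φ x₀ c (K * ρ) hu.aestronglyMeasurable hφ hφ1 hc (by nlinarith)).trans ?_
  rw [Real.mul_rpow (by linarith) hρ.le, ENNReal.ofReal_mul (by positivity),
    mul_comm (ENNReal.ofReal (K ^ _)), ← mul_assoc]
  gcongr
  rw [ENNReal.ofReal_mul hC.le]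
  gcongr

/-- Cutoff commutator estimate (4.6): for a Lipschitz cutoff `φ`, bounded by 1 and
constant outside `B(x₀, 2ρ)`, and any `K > 4`,
`∬ |φ(x)-φ(y)|²|u(x)|²/|x-y|^{N+2s} ≤ C ρ^{-2s} ∫_{B(x₀,Kρ)} |u|² + C K^{-N} ‖u‖²_{L^{2*}}`,
with `C = C(N, s, Lρ)`. -/
theorem cutoff_commutator (N : ℕ) (hN : 1 ≤ N) (s : ℝ) (hs0 : 0 < s) (hs1 : s < 1)
    (hNs : 2 * s < (N : ℝ)) (L ρ : ℝ) (hL : 0 ≤ L) (hρ : 0 < ρ) :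
    ∃ C : ℝ, 0 < C ∧
      ∀ (u φ : EuclideanSpace ℝ (Fin N) → ℂ) (x₀ : EuclideanSpace ℝ (Fin N)) (K : ℝ),
        4 < K →
        MemLp u 2 (volume : Measure (EuclideanSpace ℝ (Fin N))) →
        MemLp u (ENNReal.ofReal (2 * (N : ℝ) / ((N : ℝ) - 2 * s)))
          (volume : Measure (EuclideanSpace ℝ (Fin N))) →
        LipschitzWith (Real.toNNReal L) φ →
        (∀ x, ‖φ x‖ ≤ 1) →
        (∃ c : ℂ, ∀ x ∉ Metric.ball x₀ (2 * ρ), φ x = c) →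
        (∫⁻ x : EuclideanSpace ℝ (Fin N), ∫⁻ y : EuclideanSpace ℝ (Fin N),
            ENNReal.ofReal (‖φ x - φ y‖ ^ 2 * ‖u x‖ ^ 2
              / ‖x - y‖ ^ ((N : ℝ) + 2 * s)))
          ≤ ENNReal.ofReal (C * ρ ^ (-(2 * s)))
              * (∫⁻ x in Metric.ball x₀ (K * ρ), ENNReal.ofReal (‖u x‖ ^ 2))
            + ENNReal.ofReal (C * K ^ (-(N : ℝ)))
              * (∫⁻ x : EuclideanSpace ℝ (Fin N),
                  ENNReal.ofReal (‖u x‖ ^ (2 * (N : ℝ) / ((N : ℝ) - 2 * s))))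
                ^ (((N : ℝ) - 2 * s) / (N : ℝ)) :=
  cutoff_commutator_general N hN s hs0 hs1 hNs L ρ hρ
end

section
/- Let V : ℝ^N → ℝ be continuous and nonnegative with the property that for some τ₀ > 0 the set {x : V(x) < τ₀} has finite Lebesgue measure. Let 0 < s < 1, N > 2s, 2* = 2N/(N-2s). Then there is a constant c > 0 such that for every u ∈ H^s(ℝ^N) with ∫ V|u|² dx < ∞, ‖u‖²_{L²(ℝ^N)} ≤ c ([u]_s² + ∫_{ℝ^N} V(x)|u(x)|² dx). -/
/-!
For `x` with `V x < τ₀`, average the inequality `|u x|² ≤ 2 |u x - u y|² + 2 |u y|²` over the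
`y` in the ball `B(x, t)` where `V y ≥ τ₀`. Once `t` is so large that `|B(0, t)| > |{V < τ₀}|`,
these sets have measure at least `m = |B(0, t)| - |{V < τ₀}| > 0`, uniformly in `x`. On them
`|u y|² ≤ τ₀⁻¹ V y |u y|²` and `|u x - u y|² ≤ t^(N+2s) |u x - u y|² / |x - y|^(N+2s)`, so
`m |u x|²` is bounded by the potential energy plus the Gagliardo integral in `y` at `x`.
Integrating over `{V < τ₀}` and adding the trivial bound on `{V ≥ τ₀}` gives the claim,
without the fractional Sobolev inequality.
-/

open MeasureTheory Metric ENNReal Filter Topology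

lemma le_inv_mul_mul_of_le {τ v r : ℝ} (hτ : 0 < τ) (hv : τ ≤ v) (hr : 0 ≤ r) :
    r ≤ τ⁻¹ * (v * r) :=
  calc r = τ⁻¹ * (τ * r) := by field_simp
    _ ≤ τ⁻¹ * (v * r) := by gcongr

lemma mul_measure_le_lintegral_add {Ω : Type*} [MeasurableSpace Ω] {μ : Measure Ω} {D : Set Ω}
    {a : ℝ≥0∞} {g k : Ω → ℝ≥0∞} (hD : MeasurableSet D) (hg : AEMeasurable g μ)
    (h : ∀ y ∈ D, a ≤ g y + k y) :
    a * μ D ≤ ∫⁻ y, g y ∂μ + ∫⁻ y, k y ∂μ :=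
  calc a * μ D = ∫⁻ _ in D, a ∂μ := (setLIntegral_const D a).symm
    _ ≤ ∫⁻ y in D, (g y + k y) ∂μ := setLIntegral_mono' hD h
    _ = ∫⁻ y in D, g y ∂μ + ∫⁻ y in D, k y ∂μ := lintegral_add_left' hg.restrict _
    _ ≤ ∫⁻ y, g y ∂μ + ∫⁻ y, k y ∂μ :=
      add_le_add (setLIntegral_le_lintegral _ _) (setLIntegral_le_lintegral _ _)

lemma ENNReal.exists_pos_forall_mul_add_le {C₁ C₂ : ℝ≥0∞} (h₁ : C₁ ≠ ⊤) (h₂ : C₂ ≠ ⊤) :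
    ∃ c : ℝ, 0 < c ∧ ∀ a b : ℝ≥0∞, C₁ * a + C₂ * b ≤ ENNReal.ofReal c * (a + b) := by
  refine ⟨(max C₁ C₂).toReal + 1, by positivity, fun a b => ?_⟩
  have hC : max C₁ C₂ ≤ ENNReal.ofReal ((max C₁ C₂).toReal + 1) := by
    rw [← ofReal_toReal (max_ne_top h₁ h₂)]
    exact ofReal_le_ofReal (by simp)
  rw [mul_add]
  gcongr
  exacts [(le_max_left _ _).trans hC, (le_max_right _ _).trans hC]

lemma exists_measure_lt_measure_ball {E : Type*} [NormedAddCommGroup E] [NormedSpace ℝ E]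
    [FiniteDimensional ℝ E] [Nontrivial E] [MeasurableSpace E] [BorelSpace E]
    (μ : Measure E) [μ.IsAddHaarMeasure] {A : Set E} (hA : μ A ≠ ⊤) :
    ∃ t : ℝ, μ A < μ (ball 0 t) := by
  have hlim : Tendsto (fun n : ℕ => μ (ball 0 n)) atTop (𝓝 ⊤) := by
    rw [← measure_univ_of_isAddLeftInvariant μ, ← iUnion_ball_nat (0 : E)]
    exact tendsto_measure_iUnion_atTop fun m n hmn => ball_subset_ball (by exact_mod_cast hmn)
  obtain ⟨n, hn⟩ := (hlim.eventually (lt_mem_nhds hA.lt_top)).exists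
  exact ⟨n, hn⟩

section Pointwise

variable {X E : Type*} [NormedAddCommGroup X] [NormedAddCommGroup E] {u : X → E} {V : X → ℝ}
  {τ t p : ℝ}

lemma sq_norm_sub_le_rpow_mul_div {x y : X} (hxy : ‖x - y‖ ≤ t) (hp : 0 ≤ p) :
    ‖u x - u y‖ ^ 2 ≤ t ^ p * (‖u x - u y‖ ^ 2 / ‖x - y‖ ^ p) := by
  rcases eq_or_ne x y with rfl | hne
  · simp
  have hd : 0 < ‖x - y‖ ^ p := Real.rpow_pos_of_pos (norm_pos_iff.mpr (sub_ne_zero.mpr hne)) p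
  calc ‖u x - u y‖ ^ 2 = ‖x - y‖ ^ p * (‖u x - u y‖ ^ 2 / ‖x - y‖ ^ p) := by field_simp
    _ ≤ t ^ p * (‖u x - u y‖ ^ 2 / ‖x - y‖ ^ p) := by gcongr

lemma ofReal_sq_norm_le {x y : X} (hτ : 0 < τ) (hVy : τ ≤ V y) (hxy : ‖x - y‖ ≤ t)
    (hp : 0 ≤ p) :
    ENNReal.ofReal (‖u x‖ ^ 2) ≤ ENNReal.ofReal (2 * τ⁻¹) * ENNReal.ofReal (V y * ‖u y‖ ^ 2)
      + ENNReal.ofReal (2 * t ^ p) * ENNReal.ofReal (‖u x - u y‖ ^ 2 / ‖x - y‖ ^ p) := by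
  have htri : ‖u x‖ ^ 2 ≤ 2 * (‖u x - u y‖ ^ 2 + ‖u y‖ ^ 2) :=
    (pow_le_pow_left₀ (norm_nonneg _) (norm_le_norm_sub_add _ _) 2).trans add_sq_le
  have hy := le_inv_mul_mul_of_le hτ hVy (sq_nonneg ‖u y‖)
  have ht : 0 ≤ t ^ p := Real.rpow_nonneg ((norm_nonneg _).trans hxy) p
  have hdiff := sq_norm_sub_le_rpow_mul_div (u := u) hxy hp
  have hV : 0 ≤ V y := hτ.le.trans hVy
  rw [← ofReal_mul (by positivity), ← ofReal_mul (by positivity),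
    ← ofReal_add (by positivity) (by positivity)]
  exact ofReal_le_ofReal (by nlinarith)

end Pointwise

section Averaging

variable {X E : Type*} [MeasurableSpace X] [NormedAddCommGroup E] {μ : Measure X} {u : X → E}
  {V : X → ℝ} {τ : ℝ}

lemma setLIntegral_compl_sq_norm_le (hV : Measurable V) (hτ : 0 < τ) :
    ∫⁻ x in {x | V x < τ}ᶜ, ENNReal.ofReal (‖u x‖ ^ 2) ∂μ ≤
      ENNReal.ofReal τ⁻¹ * ∫⁻ x, ENNReal.ofReal (V x * ‖u x‖ ^ 2) ∂μ :=
  calc _ ≤ ∫⁻ x in {x | V x < τ}ᶜ, ENNReal.ofReal τ⁻¹ * ENNReal.ofReal (V x * ‖u x‖ ^ 2) ∂μ :=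
        setLIntegral_mono' (measurableSet_lt hV measurable_const).compl fun x hx => by
          rw [← ofReal_mul (by positivity)]
          exact ofReal_le_ofReal (le_inv_mul_mul_of_le hτ (not_lt.mp hx) (sq_nonneg _))
    _ ≤ ∫⁻ x, ENNReal.ofReal τ⁻¹ * ENNReal.ofReal (V x * ‖u x‖ ^ 2) ∂μ :=
        setLIntegral_le_lintegral _ _
    _ = _ := lintegral_const_mul' _ _ ofReal_ne_top

variable [NormedAddCommGroup X] [OpensMeasurableSpace X] {t p : ℝ} {m : ℝ≥0∞}

lemma ofReal_sq_norm_mul_le (hV : Measurable V) (hu : AEStronglyMeasurable u μ) (hτ : 0 < τ)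
    (hp : 0 ≤ p) {x : X} (hm : m ≤ μ (ball x t \ {y | V y < τ})) :
    ENNReal.ofReal (‖u x‖ ^ 2) * m ≤
      ENNReal.ofReal (2 * τ⁻¹) * ∫⁻ y, ENNReal.ofReal (V y * ‖u y‖ ^ 2) ∂μ
        + ENNReal.ofReal (2 * t ^ p) *
          ∫⁻ y, ENNReal.ofReal (‖u x - u y‖ ^ 2 / ‖x - y‖ ^ p) ∂μ := by
  have hg : AEMeasurable
      (fun y => ENNReal.ofReal (2 * τ⁻¹) * ENNReal.ofReal (V y * ‖u y‖ ^ 2)) μ :=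
    ((hV.aemeasurable.mul (hu.norm.aemeasurable.pow_const 2)).ennreal_ofReal).const_mul _
  rw [← lintegral_const_mul' _ _ ofReal_ne_top, ← lintegral_const_mul' _ _ ofReal_ne_top]
  calc _ ≤ ENNReal.ofReal (‖u x‖ ^ 2) * μ (ball x t \ {y | V y < τ}) := by gcongr
    _ ≤ _ := mul_measure_le_lintegral_add
      (measurableSet_ball.diff (measurableSet_lt hV measurable_const)) hg
      fun y ⟨hy, hyV⟩ => ofReal_sq_norm_le hτ (not_lt.mp hyV)
        (by rw [← dist_eq_norm]; exact (mem_ball'.mp hy).le) hp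

lemma setLIntegral_sq_norm_le (hV : Measurable V) (hu : AEStronglyMeasurable u μ) (hτ : 0 < τ)
    (hp : 0 ≤ p) (hm₀ : m ≠ 0) (hm_top : m ≠ ⊤) (hm : ∀ x, m ≤ μ (ball x t \ {y | V y < τ})) :
    ∫⁻ x in {x | V x < τ}, ENNReal.ofReal (‖u x‖ ^ 2) ∂μ ≤
      m⁻¹ * (ENNReal.ofReal (2 * τ⁻¹) * (∫⁻ y, ENNReal.ofReal (V y * ‖u y‖ ^ 2) ∂μ) *
          μ {x | V x < τ}
        + ENNReal.ofReal (2 * t ^ p) *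
          ∫⁻ x, ∫⁻ y, ENNReal.ofReal (‖u x - u y‖ ^ 2 / ‖x - y‖ ^ p) ∂μ ∂μ) := by
  calc _ ≤ ∫⁻ x in {x | V x < τ}, m⁻¹ *
        (ENNReal.ofReal (2 * τ⁻¹) * (∫⁻ y, ENNReal.ofReal (V y * ‖u y‖ ^ 2) ∂μ)
          + ENNReal.ofReal (2 * t ^ p) *
            ∫⁻ y, ENNReal.ofReal (‖u x - u y‖ ^ 2 / ‖x - y‖ ^ p) ∂μ) ∂μ :=
        lintegral_mono fun x => (mul_le_iff_le_inv hm₀ hm_top).mp <| by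
          rw [mul_comm]; exact ofReal_sq_norm_mul_le hV hu hτ hp (hm x)
    _ = m⁻¹ * (ENNReal.ofReal (2 * τ⁻¹) * (∫⁻ y, ENNReal.ofReal (V y * ‖u y‖ ^ 2) ∂μ) *
          μ {x | V x < τ}
        + ENNReal.ofReal (2 * t ^ p) * ∫⁻ x in {x | V x < τ},
          ∫⁻ y, ENNReal.ofReal (‖u x - u y‖ ^ 2 / ‖x - y‖ ^ p) ∂μ ∂μ) := by
      rw [lintegral_const_mul' _ _ (inv_ne_top.mpr hm₀), lintegral_add_left' aemeasurable_const,
        setLIntegral_const, lintegral_const_mul' _ _ ofReal_ne_top]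
    _ ≤ _ := by gcongr; exact Measure.restrict_le_self

theorem lintegral_sq_norm_le (hV : Measurable V) (hu : AEStronglyMeasurable u μ) (hτ : 0 < τ)
    (hp : 0 ≤ p) (hm₀ : m ≠ 0) (hm_top : m ≠ ⊤) (hm : ∀ x, m ≤ μ (ball x t \ {y | V y < τ})) :
    ∫⁻ x, ENNReal.ofReal (‖u x‖ ^ 2) ∂μ ≤
      m⁻¹ * ENNReal.ofReal (2 * t ^ p) *
          (∫⁻ x, ∫⁻ y, ENNReal.ofReal (‖u x - u y‖ ^ 2 / ‖x - y‖ ^ p) ∂μ ∂μ)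
        + (m⁻¹ * ENNReal.ofReal (2 * τ⁻¹) * μ {x | V x < τ} + ENNReal.ofReal τ⁻¹) *
          ∫⁻ x, ENNReal.ofReal (V x * ‖u x‖ ^ 2) ∂μ :=
  calc _ = ∫⁻ x in {x | V x < τ}, ENNReal.ofReal (‖u x‖ ^ 2) ∂μ
        + ∫⁻ x in {x | V x < τ}ᶜ, ENNReal.ofReal (‖u x‖ ^ 2) ∂μ :=
        (lintegral_add_compl _ (measurableSet_lt hV measurable_const)).symm
    _ ≤ _ := add_le_add (setLIntegral_sq_norm_le hV hu hτ hp hm₀ hm_top hm)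
        (setLIntegral_compl_sq_norm_le hV hτ)
    _ = _ := by ring

end Averaging

theorem embedding_L2_general (N : ℕ) (hN : 1 ≤ N) (s : ℝ) (hs0 : 0 < s)
    (V : EuclideanSpace ℝ (Fin N) → ℝ)
    (hVcont : Continuous V)
    (τ₀ : ℝ) (hτ₀ : 0 < τ₀)
    (hVfin : volume {x : EuclideanSpace ℝ (Fin N) | V x < τ₀} < ⊤) :
    ∃ c : ℝ, 0 < c ∧
      ∀ u : EuclideanSpace ℝ (Fin N) → ℂ,
        MemLp u 2 (volume : Measure (EuclideanSpace ℝ (Fin N))) →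
        (∫⁻ x : EuclideanSpace ℝ (Fin N), ∫⁻ y : EuclideanSpace ℝ (Fin N),
            ENNReal.ofReal (‖u x - u y‖ ^ 2 / ‖x - y‖ ^ ((N : ℝ) + 2 * s))) < ⊤ →
        (∫⁻ x : EuclideanSpace ℝ (Fin N), ENNReal.ofReal (V x * ‖u x‖ ^ 2)) < ⊤ →
        (∫⁻ x : EuclideanSpace ℝ (Fin N), ENNReal.ofReal (‖u x‖ ^ 2))
          ≤ ENNReal.ofReal c *
              ((∫⁻ x : EuclideanSpace ℝ (Fin N), ∫⁻ y : EuclideanSpace ℝ (Fin N),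
                  ENNReal.ofReal (‖u x - u y‖ ^ 2 / ‖x - y‖ ^ ((N : ℝ) + 2 * s)))
                + ∫⁻ x : EuclideanSpace ℝ (Fin N), ENNReal.ofReal (V x * ‖u x‖ ^ 2)) := by
  have : Nontrivial (EuclideanSpace ℝ (Fin N)) :=
    Module.nontrivial_of_finrank_pos (R := ℝ) (by rw [finrank_euclideanSpace_fin]; exact hN)
  set A := {x : EuclideanSpace ℝ (Fin N) | V x < τ₀}
  obtain ⟨t, ht⟩ := exists_measure_lt_measure_ball volume hVfin.ne
  set m := volume (ball (0 : EuclideanSpace ℝ (Fin N)) t) - volume A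
  have hm₀ : m ≠ 0 := (tsub_pos_iff_lt.mpr ht).ne'
  have hm_top : m ≠ ⊤ := ne_top_of_le_ne_top measure_ball_lt_top.ne tsub_le_self
  have hm : ∀ x, m ≤ volume (ball x t \ A) := fun x => by
    show volume (ball 0 t) - volume A ≤ _
    rw [← Measure.addHaar_ball_center volume x t]
    exact le_measure_sdiff
  obtain ⟨c, hc, hc_le⟩ := ENNReal.exists_pos_forall_mul_add_le
    (mul_ne_top (inv_ne_top.mpr hm₀) ofReal_ne_top)
    (add_ne_top.mpr ⟨mul_ne_top (mul_ne_top (inv_ne_top.mpr hm₀) ofReal_ne_top) hVfin.ne,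
      ofReal_ne_top⟩)
  exact ⟨c, hc, fun u hu _ _ => (lintegral_sq_norm_le hVcont.measurable
    hu.aestronglyMeasurable hτ₀ (by positivity) hm₀ hm_top hm).trans (hc_le _ _)⟩

/-- Continuous embedding `E ↪ L²` under assumption (V): if `V` is continuous, nonnegative,
and `{V < τ₀}` has finite measure for some `τ₀ > 0`, then
`‖u‖²_{L²} ≤ c ([u]_s² + ∫ V |u|²)` for all `u ∈ H^s` with `∫ V|u|² < ∞`. -/
theorem embedding_L2 (N : ℕ) (hN : 1 ≤ N) (s : ℝ) (hs0 : 0 < s) (hs1 : s < 1)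
    (hNs : 2 * s < (N : ℝ)) (V : EuclideanSpace ℝ (Fin N) → ℝ)
    (hVcont : Continuous V) (hVnonneg : ∀ x, 0 ≤ V x)
    (τ₀ : ℝ) (hτ₀ : 0 < τ₀)
    (hVfin : volume {x : EuclideanSpace ℝ (Fin N) | V x < τ₀} < ⊤) :
    ∃ c : ℝ, 0 < c ∧
      ∀ u : EuclideanSpace ℝ (Fin N) → ℂ,
        MemLp u 2 (volume : Measure (EuclideanSpace ℝ (Fin N))) →
        (∫⁻ x : EuclideanSpace ℝ (Fin N), ∫⁻ y : EuclideanSpace ℝ (Fin N),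
            ENNReal.ofReal (‖u x - u y‖ ^ 2 / ‖x - y‖ ^ ((N : ℝ) + 2 * s))) < ⊤ →
        (∫⁻ x : EuclideanSpace ℝ (Fin N), ENNReal.ofReal (V x * ‖u x‖ ^ 2)) < ⊤ →
        (∫⁻ x : EuclideanSpace ℝ (Fin N), ENNReal.ofReal (‖u x‖ ^ 2))
          ≤ ENNReal.ofReal c *
              ((∫⁻ x : EuclideanSpace ℝ (Fin N), ∫⁻ y : EuclideanSpace ℝ (Fin N),
                  ENNReal.ofReal (‖u x - u y‖ ^ 2 / ‖x - y‖ ^ ((N : ℝ) + 2 * s)))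
                + ∫⁻ x : EuclideanSpace ℝ (Fin N), ENNReal.ofReal (V x * ‖u x‖ ^ 2)) :=
  embedding_L2_general N hN s hs0 V hVcont τ₀ hτ₀ hVfin
end
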